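/- Let γ and γ' be geodesic rays from the origin in DL_2(q) that both bottom out at height −h in tree T_i. If there exists t with γ^(i)(t) ≠ γ'^(i)(t), then γ and γ' are not asymptotic. -/

import Mathlib

/-- A vertex of the (q+1)-regular tree with a distinguished end, in the
horocyclic model: a height `k ∈ ℤ` together with a finitely supported
labelling of the levels strictly below `k`. -/
structure TreeVert (q : ℕ) where
  height : ℤ
  labels : ℤ → ℕ
  labels_lt : ∀ n, labels n = 0 ∨ labels n < q
  supp_below : ∀ n, height ≤ n → labels n = 0
  fin_supp : (Function.support labels).Finite

namespace DL

variable {q d : ℕ}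

/-- `v` is a child of `u` (one step further from the distinguished end). -/
abbrev treeAdjUp (u v : TreeVert q) : Prop :=
  v.height = u.height + 1 ∧ ∀ n, n ≠ u.height → v.labels n = u.labels n

/-- The (q+1)-regular tree. -/
def TreeGraph (q : ℕ) : SimpleGraph (TreeVert q) where
  Adj u v := treeAdjUp u v ∨ treeAdjUp v u
  symm := ⟨fun u v h => Or.symm h⟩
  loopless := by
    refine ⟨?_⟩
    intro u h
    rcases h with ⟨h1, _⟩ | ⟨h1, _⟩ <;> omega

/-- The base vertex of the tree. -/
def treeOrigin (q : ℕ) : TreeVert q :=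
  ⟨0, fun _ => 0, fun _ => Or.inl rfl, fun _ _ => rfl, by simp⟩

/-- Vertices of the Diestel–Leader graph `DL_d(q)`:
`d`-tuples of tree vertices whose heights sum to zero. -/
def DLVert (d q : ℕ) : Type :=
  {x : Fin d → TreeVert q // (∑ i, (x i).height) = 0}

/-- The Diestel–Leader graph `DL_d(q)`: an edge ascends in one tree and
descends in another, all other coordinates being fixed. -/
def DLGraph (d q : ℕ) : SimpleGraph (DLVert d q) where
  Adj v w := ∃ i j : Fin d, i ≠ j ∧ treeAdjUp (v.1 i) (w.1 i) ∧ treeAdjUp (w.1 j) (v.1 j) ∧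
      ∀ k : Fin d, k ≠ i → k ≠ j → v.1 k = w.1 k
  symm := by
    refine ⟨?_⟩
    rintro v w ⟨i, j, hij, h1, h2, h3⟩
    exact ⟨j, i, hij.symm, h2, h1, fun k hk1 hk2 => (h3 k hk2 hk1).symm⟩
  loopless := by
    refine ⟨?_⟩
    rintro v ⟨i, j, hij, ⟨h1, _⟩, _⟩
    omega

/-- The base point of `DL_d(q)`. -/
def origin (d q : ℕ) : DLVert d q :=
  ⟨fun _ => treeOrigin q, by simp [treeOrigin]⟩

/-- A geodesic ray in `DL_d(q)` : an isometric embedding of `ℕ`. -/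
def IsGeodesicRay (γ : ℕ → DLVert d q) : Prop :=
  ∀ m n : ℕ, m ≤ n → (DLGraph d q).dist (γ m) (γ n) = n - m

/-- Two rays are asymptotic when they stay at uniformly bounded distance. -/
def Asymptotic (γ γ' : ℕ → DLVert d q) : Prop :=
  ∃ C : ℕ, ∀ n : ℕ, (DLGraph d q).dist (γ n) (γ' n) ≤ C

instance : TopologicalSpace (DLVert d q) := ⊥

/-- Geodesic rays emanating from the origin, with the topology of uniform
convergence on compact sets (= pointwise convergence, the vertex set being
discrete). -/
def RaySpace (d q : ℕ) : Type :=
  {γ : ℕ → DLVert d q // IsGeodesicRay γ ∧ γ 0 = origin d q}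

instance : TopologicalSpace (RaySpace d q) := by
  unfold RaySpace; infer_instance

lemma reachable_origin (γ : RaySpace d q) (n : ℕ) :
    (DLGraph d q).Reachable (origin d q) (γ.1 n) := by
  cases n with
  | zero => rw [γ.2.2]
  | succ n =>
    have h := γ.2.1 0 (n + 1) (Nat.zero_le _)
    have hne : (DLGraph d q).dist (γ.1 0) (γ.1 (n + 1)) ≠ 0 := by
      rw [h]; omega
    have := SimpleGraph.Reachable.of_dist_ne_zero hne
    rwa [γ.2.2] at this

/-- Asymptoticity as an equivalence relation on geodesic rays from the origin. -/
def asympSetoid (d q : ℕ) : Setoid (RaySpace d q) where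
  r γ γ' := Asymptotic γ.1 γ'.1
  iseqv := by
    constructor
    · intro γ
      exact ⟨0, fun n => by simp [SimpleGraph.dist_self]⟩
    · rintro γ γ' ⟨C, hC⟩
      exact ⟨C, fun n => by rw [SimpleGraph.dist_comm]; exact hC n⟩
    · rintro a b c ⟨C1, h1⟩ ⟨C2, h2⟩
      refine ⟨C1 + C2, fun n => ?_⟩
      have hab : (DLGraph d q).Reachable (a.1 n) (b.1 n) :=
        (reachable_origin a n).symm.trans (reachable_origin b n)
      have hbc : (DLGraph d q).Reachable (b.1 n) (c.1 n) :=
        (reachable_origin b n).symm.trans (reachable_origin c n)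
      obtain ⟨p, hp⟩ := hab.exists_walk_length_eq_dist
      obtain ⟨p', hp'⟩ := hbc.exists_walk_length_eq_dist
      calc (DLGraph d q).dist (a.1 n) (c.1 n) ≤ (p.append p').length :=
            SimpleGraph.dist_le _
        _ = (DLGraph d q).dist (a.1 n) (b.1 n) + (DLGraph d q).dist (b.1 n) (c.1 n) := by
            rw [SimpleGraph.Walk.length_append, hp, hp']
        _ ≤ C1 + C2 := Nat.add_le_add (h1 n) (h2 n)

/-- The visual boundary of `DL_d(q)`: asymptotic classes of geodesic rays
from the origin, with the quotient topology. -/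
def Boundary (d q : ℕ) : Type := Quotient (asympSetoid d q)

instance : TopologicalSpace (Boundary d q) := by
  unfold Boundary; infer_instance

/-- A ray in `DL_2(q)` descends for exactly `n` steps in tree `i`
(bottoming out at height `-n`), then ascends forever in tree `i`.
For `n = 0` this says the ray ascends forever in tree `i` with no turn. -/
def DescendsExactly (i : Fin 2) (n : ℕ) (γ : ℕ → DLVert 2 q) : Prop :=
  (∀ t : ℕ, t ≤ n → ((γ t).1 i).height = -(t : ℤ)) ∧
  (∀ t : ℕ, n ≤ t → ((γ t).1 i).height = (t : ℤ) - 2 * n)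

/-- The subset `C_n^i` of the boundary: classes of rays bottoming out in
tree `i` after descending exactly `n` edges. -/
def Cset (q : ℕ) (i : Fin 2) (n : ℕ) : Set (Boundary 2 q) :=
  {x | ∃ γ : RaySpace 2 q, Quotient.mk (asympSetoid 2 q) γ = x ∧ DescendsExactly i n γ.1}

/-- Projection of a path in `DL_d(q)` to the `i`-th tree. -/
def proj (i : Fin d) (γ : ℕ → DLVert d q) : ℕ → TreeVert q := fun n => (γ n).1 i

/-- Two (lazy) paths in the tree converge to the same end: both eventually
leave every ball, and they come within a uniformly bounded distance of each
other at arbitrarily late times. -/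
def SameEnd (a b : ℕ → TreeVert q) : Prop :=
  (∀ R : ℕ, ∃ N : ℕ, ∀ n, N ≤ n → R ≤ (TreeGraph q).dist (a 0) (a n)) ∧
  (∀ R : ℕ, ∃ N : ℕ, ∀ n, N ≤ n → R ≤ (TreeGraph q).dist (b 0) (b n)) ∧
  (∃ C : ℕ, ∀ N : ℕ, ∃ m n, N ≤ m ∧ N ≤ n ∧ (TreeGraph q).dist (a m) (b n) ≤ C)

/-- The step from `p m` to `p (m+1)` descends in tree `i`. -/
def StepDown (i : Fin d) (p : ℕ → DLVert d q) (m : ℕ) : Prop :=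
  treeAdjUp ((p (m + 1)).1 i) ((p m).1 i)

/-- The step from `p m` to `p (m+1)` ascends in tree `i`. -/
def StepUp (i : Fin d) (p : ℕ → DLVert d q) (m : ℕ) : Prop :=
  treeAdjUp ((p m).1 i) ((p (m + 1)).1 i)

/-- A turn in tree `i`: a subpath beginning with a descent in `T_i` at step `t`,
ending with an ascent in `T_i` at step `s`, with no intervening step
involving `T_i`. -/
def IsTurn (i : Fin d) (p : ℕ → DLVert d q) (t s : ℕ) : Prop :=
  t < s ∧ StepDown i p t ∧ StepUp i p s ∧
    ∀ m, t < m → m < s → (p (m + 1)).1 i = (p m).1 i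

/-!
The projections of `γ` and `γ'` to `T_i` agree while descending, since a vertex of the tree has a
unique parent. So they first differ after the turn, at two vertices of the same height whose labels
differ at some lower level `n₀`. From then on both projections only ascend, which never changes a
label below the current height, so the labels at level `n₀` stay different. A tree path between two
vertices whose labels differ at level `n₀` must descend to height `n₀`, hence the projected distance,
and with it the distance in `DL_2(q)`, grows linearly.
-/

@[ext]
theorem _root_.TreeVert.ext {u v : TreeVert q} (hheight : u.height = v.height)
    (hlabels : u.labels = v.labels) : u = v := by
  cases u; cases v; simp_all

theorem treeAdjUp_left_unique {u v v' : TreeVert q} (h : treeAdjUp v u) (h' : treeAdjUp v' u) :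
    v = v' := by
  have hheight : v.height = v'.height := by linarith [h.1, h'.1]
  ext n
  · exact hheight
  · by_cases hn : n = v.height
    · rw [v.supp_below n hn.ge, v'.supp_below n (hheight ▸ hn).ge]
    · rw [← h.2 n hn, h'.2 n (hheight ▸ hn)]

theorem exists_labels_ne_of_height_eq {u v : TreeVert q} (hheight : u.height = v.height)
    (hne : u ≠ v) : ∃ n < u.height, u.labels n ≠ v.labels n := by
  obtain ⟨n, hn⟩ := Function.ne_iff.mp fun hlabels => hne (TreeVert.ext hheight hlabels)
  refine ⟨n, lt_of_not_ge fun hge => hn ?_, hn⟩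
  rw [u.supp_below n hge, v.supp_below n (hheight ▸ hge)]

theorem height_sub_le_length {u v : TreeVert q} (p : (TreeGraph q).Walk u v) :
    v.height - u.height ≤ p.length := by
  induction p with
  | nil => simp
  | cons hadj p ih =>
    rw [SimpleGraph.Walk.length_cons, Nat.cast_succ]
    rcases hadj with ⟨hup, -⟩ | ⟨hdown, -⟩ <;> omega

/-- A walk between vertices whose labels differ at level `n₀` passes through height `n₀`. -/
theorem height_add_height_sub_le_length {u v : TreeVert q} (p : (TreeGraph q).Walk u v) (n₀ : ℤ)
    (hlabels : u.labels n₀ ≠ v.labels n₀) : u.height + v.height - 2 * n₀ ≤ p.length := by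
  induction p with
  | nil => exact absurd rfl hlabels
  | @cons u w v hadj p ih =>
    rw [SimpleGraph.Walk.length_cons, Nat.cast_succ]
    by_cases hw : w.labels n₀ = v.labels n₀
    · have hstep : u.labels n₀ ≠ w.labels n₀ := fun h => hlabels (h.trans hw)
      have hp := height_sub_le_length p
      rcases hadj with ⟨hup, hfix⟩ | ⟨hdown, hfix⟩
      · have : n₀ = u.height := by_contra fun hn => hstep (hfix n₀ hn).symm
        omega
      · have : n₀ = w.height := by_contra fun hn => hstep (hfix n₀ hn)
        omega
    · have := ih hw
      rcases hadj with ⟨hup, -⟩ | ⟨hdown, -⟩ <;> omega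

theorem eq_of_descend {a b : ℕ → TreeVert q} {h : ℕ} (h0 : a 0 = b 0)
    (ha : ∀ t < h, treeAdjUp (a (t + 1)) (a t)) (hb : ∀ t < h, treeAdjUp (b (t + 1)) (b t)) :
    ∀ t ≤ h, a t = b t := by
  intro t ht
  induction t with
  | zero => exact h0
  | succ t ih =>
    exact treeAdjUp_left_unique (ha t ht) ((ih (by omega)).symm ▸ hb t ht)

theorem height_le_of_ascend {a : ℕ → TreeVert q} {T : ℕ}
    (ha : ∀ t ≥ T, treeAdjUp (a t) (a (t + 1))) :
    ∀ t ≥ T, (a T).height ≤ (a t).height := by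
  intro t ht
  induction t, ht using Nat.le_induction with
  | base => rfl
  | succ t ht ih => linarith [(ha t ht).1]

theorem labels_eq_of_ascend {a : ℕ → TreeVert q} {T : ℕ}
    (ha : ∀ t ≥ T, treeAdjUp (a t) (a (t + 1))) {n₀ : ℤ} (hn₀ : n₀ < (a T).height) :
    ∀ t ≥ T, (a t).labels n₀ = (a T).labels n₀ := by
  intro t ht
  induction t, ht using Nat.le_induction with
  | base => rfl
  | succ t ht ih =>
    have := height_le_of_ascend ha t ht
    rw [(ha t ht).2 n₀ (by omega), ih]

/-- Every edge of `DL_2(q)` moves both trees, so no edge collapses under projection. -/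
def projHom (q : ℕ) (i : Fin 2) : DLGraph 2 q →g TreeGraph q where
  toFun x := x.1 i
  map_rel' := by
    rintro x y ⟨a, b, hab, hup, hdown, -⟩
    have : i = a ∨ i = b := by omega
    rcases this with rfl | rfl
    exacts [Or.inl hup, Or.inr hdown]

theorem height_add_height_sub_le_dist (i : Fin 2) {x y : DLVert 2 q}
    (hxy : (DLGraph 2 q).Reachable x y) {n₀ : ℤ}
    (hlabels : (x.1 i).labels n₀ ≠ (y.1 i).labels n₀) :
    (x.1 i).height + (y.1 i).height - 2 * n₀ ≤ (DLGraph 2 q).dist x y := by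
  obtain ⟨p, hp⟩ := hxy.exists_walk_length_eq_dist
  have := height_add_height_sub_le_length (p.map (projHom q i)) n₀ hlabels
  rwa [SimpleGraph.Walk.length_map, hp] at this

theorem IsGeodesicRay.tree_adj {γ : ℕ → DLVert 2 q} (hγ : IsGeodesicRay γ) (i : Fin 2)
    (t : ℕ) :
    (TreeGraph q).Adj ((γ t).1 i) ((γ (t + 1)).1 i) :=
  (projHom q i).map_rel <| SimpleGraph.dist_eq_one_iff_adj.mp <| by
    simpa using hγ t (t + 1) t.le_succ

theorem DescendsExactly.stepDown {γ : ℕ → DLVert 2 q} {i : Fin 2} {h : ℕ}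
    (hdesc : DescendsExactly i h γ) (hγ : IsGeodesicRay γ) : ∀ t < h, StepDown i γ t := by
  intro t ht
  have h₀ := hdesc.1 t ht.le
  have h₁ := hdesc.1 (t + 1) ht
  rcases hγ.tree_adj i t with hup | hdown
  · push_cast at h₁; omega
  · exact hdown

theorem DescendsExactly.stepUp {γ : ℕ → DLVert 2 q} {i : Fin 2} {h : ℕ}
    (hdesc : DescendsExactly i h γ) (hγ : IsGeodesicRay γ) : ∀ t ≥ h, StepUp i γ t := by
  intro t ht
  have h₀ := hdesc.2 t ht
  have h₁ := hdesc.2 (t + 1) (by omega)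
  rcases hγ.tree_adj i t with hup | hdown
  · exact hup
  · push_cast at h₁; omega

theorem DescendsExactly.eq_of_le {γ γ' : ℕ → DLVert 2 q} {i : Fin 2} {h : ℕ}
    (hdesc : DescendsExactly i h γ) (hdesc' : DescendsExactly i h γ')
    (hγ : IsGeodesicRay γ) (hγ' : IsGeodesicRay γ') (h0 : γ 0 = γ' 0) :
    ∀ t ≤ h, (γ t).1 i = (γ' t).1 i :=
  eq_of_descend (a := proj i γ) (b := proj i γ') (by rw [proj, proj, h0])
    (hdesc.stepDown hγ) (hdesc'.stepDown hγ')

theorem DescendsExactly.labels_eq {γ : ℕ → DLVert 2 q} {i : Fin 2} {h : ℕ}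
    (hdesc : DescendsExactly i h γ) (hγ : IsGeodesicRay γ) {T : ℕ} (hT : h ≤ T) {n₀ : ℤ}
    (hn₀ : n₀ < (T : ℤ) - 2 * h) :
    ∀ t ≥ T, ((γ t).1 i).labels n₀ = ((γ T).1 i).labels n₀ :=
  labels_eq_of_ascend (a := proj i γ) (fun t ht => hdesc.stepUp hγ t (hT.trans ht))
    (by rwa [proj, hdesc.2 T hT])

theorem not_asymptotic_of_different_projection_general {q : ℕ} (i : Fin 2)
    (h : ℕ) (γ γ' : ℕ → DLVert 2 q)
    (hγ : IsGeodesicRay γ) (hγ' : IsGeodesicRay γ')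
    (hγ0 : γ 0 = origin 2 q) (hγ'0 : γ' 0 = origin 2 q)
    (hdesc : DescendsExactly i h γ) (hdesc' : DescendsExactly i h γ')
    (hne : ∃ t : ℕ, (γ t).1 i ≠ (γ' t).1 i) :
    ¬ Asymptotic γ γ' := by
  obtain ⟨T, hT⟩ := hne
  have hhT : h < T := lt_of_not_ge fun hle =>
    hT (hdesc.eq_of_le hdesc' hγ hγ' (hγ0.trans hγ'0.symm) T hle)
  have hheight := hdesc.2 T hhT.le
  obtain ⟨n₀, hn₀, hlabels⟩ :=
    exists_labels_ne_of_height_eq (hheight.trans (hdesc'.2 T hhT.le).symm) hT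
  rw [hheight] at hn₀
  rintro ⟨C, hC⟩
  obtain ⟨n, hn⟩ : ∃ n, n = T + C + 1 := ⟨_, rfl⟩
  have hlabels_n : ((γ n).1 i).labels n₀ ≠ ((γ' n).1 i).labels n₀ := by
    rwa [hdesc.labels_eq hγ hhT.le hn₀ n (by omega),
      hdesc'.labels_eq hγ' hhT.le hn₀ n (by omega)]
  have hreach : (DLGraph 2 q).Reachable (γ n) (γ' n) :=
    (reachable_origin ⟨γ, hγ, hγ0⟩ n).symm.trans (reachable_origin ⟨γ', hγ', hγ'0⟩ n)
  have hdist := height_add_height_sub_le_dist i hreach hlabels_n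
  rw [hdesc.2 n (by omega), hdesc'.2 n (by omega)] at hdist
  have := hC n
  omega

/-- two geodesic rays from the origin of `DL_2(q)` bottoming out
at height `-h` in tree `i` whose projections to tree `i` differ somewhere are
not asymptotic. -/
theorem not_asymptotic_of_different_projection {q : ℕ} (hq : 2 ≤ q) (i : Fin 2)
    (h : ℕ) (γ γ' : ℕ → DLVert 2 q)
    (hγ : IsGeodesicRay γ) (hγ' : IsGeodesicRay γ')
    (hγ0 : γ 0 = origin 2 q) (hγ'0 : γ' 0 = origin 2 q)
    (hdesc : DescendsExactly i h γ) (hdesc' : DescendsExactly i h γ')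
    (hne : ∃ t : ℕ, (γ t).1 i ≠ (γ' t).1 i) :
    ¬ Asymptotic γ γ' :=
  not_asymptotic_of_different_projection_general i h γ γ' hγ hγ' hγ0 hγ'0 hdesc hdesc' hne

end DL
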